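/- (Degree-$d$ Chow's theorem.) Let $f : \{-1,1\}^n \to \{-1,1\}$ be a degree-$d$ polynomial threshold function and let $g : \{-1,1\}^n \to [-1,1]$ be any bounded function. If $\hat f(S) = \hat g(S)$ for all $S \subseteq [n]$ with $|S| \le d$, then $f(x) = g(x)$ for all $x \in \{-1,1\}^n$. -/
import Mathlib


open Finset

def pm {n : ℕ} (x : Fin n → Bool) (i : Fin n) : ℝ := if x i then 1 else -1

noncomputable def expect (n : ℕ) (F : (Fin n → Bool) → ℝ) : ℝ :=
  (∑ x : Fin n → Bool, F x) / 2 ^ n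

noncomputable def chi {n : ℕ} (S : Finset (Fin n)) (x : Fin n → Bool) : ℝ :=
  ∏ i ∈ S, pm x i

noncomputable def fCoeffD {n : ℕ} (f : (Fin n → Bool) → ℝ) (S : Finset (Fin n)) : ℝ :=
  expect n (fun x => f x * chi S x)

noncomputable def sgn (z : ℝ) : ℝ := if 0 ≤ z then 1 else -1

/-- Degree-`d` Chow's theorem: a degree-`d` PTF `f` agrees with any `[-1,1]`-valued `g`
having the same degree-at-most-`d` Fourier coefficients. -/
theorem stmt4 (n d : ℕ) (c : Finset (Fin n) → ℝ)
    (hdeg : ∀ S : Finset (Fin n), d < S.card → c S = 0)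
    (p f g : (Fin n → Bool) → ℝ)
    (hp : ∀ x, p x = ∑ S : Finset (Fin n), c S * chi S x)
    (hf : ∀ x, f x = sgn (p x))
    (hg : ∀ x, |g x| ≤ 1)
    (hchow : ∀ S : Finset (Fin n), S.card ≤ d → fCoeffD f S = fCoeffD g S) :
    ∀ x, f x = g x := by
  classical
  have hpow : (2:ℝ) ^ n ≠ 0 := by positivity
  have hsum0 : ∀ S : Finset (Fin n), S.card ≤ d →
      ∑ x : Fin n → Bool, (f x - g x) * chi S x = 0 := by
    intro S hS
    have h := hchow S hS
    unfold fCoeffD _root_.expect at h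
    have h' : ∑ x : Fin n → Bool, f x * chi S x = ∑ x : Fin n → Bool, g x * chi S x := by
      field_simp at h; linarith
    simp [sub_mul, Finset.sum_sub_distrib, h']
  obtain ⟨ε, hεpos, hεlt⟩ : ∃ ε : ℝ, 0 < ε ∧ ∀ x, p x ≠ 0 → ε < |p x| := by
    by_cases hne : (Finset.univ.filter (fun x => p x ≠ 0) : Finset (Fin n → Bool)).Nonempty
    · set T := (Finset.univ.filter (fun x => p x ≠ 0) : Finset (Fin n → Bool)) with hT
      have hinf : 0 < T.inf' hne (fun x => |p x|) := by
        rw [Finset.lt_inf'_iff]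
        intro x hx
        simp only [hT, Finset.mem_filter] at hx
        exact abs_pos.mpr hx.2
      refine ⟨T.inf' hne (fun x => |p x|) / 2, by linarith, fun x hx => ?_⟩
      have hxT : x ∈ T := by simp [hT, hx]
      have := Finset.inf'_le (fun x => |p x|) hxT
      linarith
    · exact ⟨1, one_pos, fun x hx =>
        absurd ⟨x, by simp [hx]⟩ hne⟩
  have hg1 : ∀ x, -1 ≤ g x ∧ g x ≤ 1 := fun x => abs_le.mp (hg x)
  have hkey : ∀ x : Fin n → Bool, 0 ≤ (f x - g x) * (p x + ε) ∧ p x + ε ≠ 0 := by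
    intro x
    rcases le_or_gt 0 (p x) with h | h
    · have hq : 0 < p x + ε := by linarith
      have hf1 : f x = 1 := by rw [hf x]; simp [sgn, h]
      refine ⟨mul_nonneg ?_ (le_of_lt hq), ne_of_gt hq⟩
      rw [hf1]; linarith [(hg1 x).2]
    · have hq : p x + ε < 0 := by
        have := hεlt x (ne_of_lt h)
        rw [abs_of_neg h] at this
        linarith
      have hf1 : f x = -1 := by rw [hf x]; simp [sgn, not_le.mpr h]
      refine ⟨?_, ne_of_lt hq⟩
      have h1 : f x - g x ≤ 0 := by rw [hf1]; linarith [(hg1 x).1]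
      nlinarith
  have hsum : ∑ x : Fin n → Bool, (f x - g x) * (p x + ε) = 0 := by
    have hrw : ∀ x : Fin n → Bool, (f x - g x) * (p x + ε)
        = (∑ S : Finset (Fin n), c S * ((f x - g x) * chi S x))
          + ε * ((f x - g x) * chi (∅ : Finset (Fin n)) x) := by
      intro x
      rw [hp x, mul_add, Finset.mul_sum]
      congr 1
      · exact Finset.sum_congr rfl fun S _ => by ring
      · simp [chi]; ring
    calc ∑ x : Fin n → Bool, (f x - g x) * (p x + ε)
        = ∑ x : Fin n → Bool, ((∑ S : Finset (Fin n), c S * ((f x - g x) * chi S x))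
            + ε * ((f x - g x) * chi (∅ : Finset (Fin n)) x)) :=
          Finset.sum_congr rfl fun x _ => hrw x
      _ = (∑ S : Finset (Fin n), c S * ∑ x : Fin n → Bool, (f x - g x) * chi S x)
            + ε * ∑ x : Fin n → Bool, (f x - g x) * chi (∅ : Finset (Fin n)) x := by
          rw [Finset.sum_add_distrib, ← Finset.mul_sum]
          congr 1
          rw [Finset.sum_comm]
          exact Finset.sum_congr rfl fun S _ => by rw [Finset.mul_sum]
      _ = 0 := by
          rw [Finset.sum_eq_zero (fun S _ => ?_), hsum0 ∅ (by simp), mul_zero, add_zero]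
          by_cases hS : S.card ≤ d
          · rw [hsum0 S hS, mul_zero]
          · rw [hdeg S (not_le.mp hS), zero_mul]
  intro x
  have h0 := (Finset.sum_eq_zero_iff_of_nonneg (fun y _ => (hkey y).1)).mp hsum x
    (Finset.mem_univ x)
  rcases mul_eq_zero.mp h0 with h | h
  · linarith [sub_eq_zero.mp h]
  · exact absurd h (hkey x).2
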